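/- Let n ≥ 4 be even and let Λ be a finite set. For each i ∈ {1,…,n} let ξ_i : {0,1} × Λ → [0,1] satisfy ξ_i(0,λ) + ξ_i(1,λ) = 1 for all λ. For each i ∈ {1,…,n} (with index n+1 read as 1) let ζ_i, ζ'_i : {0,1}² × Λ → [0,1] be joint response functions for the pair (M_i, M_{i+1}) that are normalized (Σ_{a,b∈{0,1}} ζ_i(a,b,λ) = 1) and satisfy the measurement-noncontextuality (marginal) conditions Σ_b ζ_i(a,b,λ) = ξ_i(a,λ), Σ_a ζ_i(a,b,λ) = ξ_{i+1}(b,λ) for all a, b, λ, and likewise for ζ'_i. Let μ_*, μ_*^⊥ and μ_i, μ_i^⊥ (i ∈ {1,…,n}) be probability distributions on Λ satisfying ½(μ_* + μ_*^⊥) = ½(μ_i + μ_i^⊥) for every i. Define p(chained | ζ, μ) := (1/n)[ Σ_{i=1}^{n−1} Σ_λ (ζ_i(0,0,λ) + ζ_i(1,1,λ)) μ(λ) + Σ_λ (ζ_n(0,1,λ) + ζ_n(1,0,λ)) μ(λ) ], η(ξ_i, μ) := 2·max_{a∈{0,1}} Σ_λ ξ_i(a,λ)μ(λ) − 1, and η_ave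 := (1/2n) Σ_{i=1}^{n} (η(ξ_i, μ_i) + η(ξ_i, μ_i^⊥)). Then p(chained | ζ, μ_*) + p(chained | ζ', μ_*^⊥) ≤ 2(1 − η_ave/n). (The operational noncontextuality inequality for even n-cycle scenarios, with the chained pattern of correlations.) -/

import Mathlib

open scoped BigOperators

/-- The average probability of the chained pattern of correlations `p(chained | M_*, P)`:
positive correlation for the cyclically adjacent pairs `(M_i, M_{i+1})`, `i ≠ n−1`, and
anticorrelation for the last pair (which in `ZMod n` is the pair starting at `i = −1`);
outcome `0` is encoded by `false`, `1` by `true`. -/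
noncomputable def pChained (n : ℕ) [NeZero n] {Λ : Type*} [Fintype Λ]
    (ζ : ZMod n → Bool → Bool → Λ → ℝ) (μ : Λ → ℝ) : ℝ :=
  (1 / (n : ℝ)) * ∑ i : ZMod n, ∑ l,
    (if i = -1 then ζ i false true l + ζ i true false l
      else ζ i false false l + ζ i true true l) * μ l

/-- The ontological predictability `η(ξ, μ) = 2 max_a Σ_l ξ(a,l) μ(l) − 1` of a binary
response function `ξ` on the distribution `μ`. -/
noncomputable def predictability {Λ : Type*} [Fintype Λ]
    (ξ : Bool → Λ → ℝ) (μ : Λ → ℝ) : ℝ :=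
  2 * max (∑ l, ξ false l * μ l) (∑ l, ξ true l * μ l) - 1

/-- Telescoping bound for sums of absolute differences. -/
lemma ncyc_telescope (q : ℕ → ℝ) (a : ℕ) : ∀ b, a ≤ b →
    |q a - q b| ≤ ∑ k ∈ Finset.Ico a b, |q k - q (k + 1)| := by
  intro b hb
  induction b, hb using Nat.le_induction with
  | base => simp
  | succ b hb ih =>
    rw [Finset.sum_Ico_succ_top hb]
    have h := abs_sub_le (q a) (q b) (q (b + 1))
    linarith

/-- Sum over `ZMod n` as a sum over `Finset.range n`. -/
lemma ncyc_sum_zmod (n : ℕ) [NeZero n] (f : ZMod n → ℝ) :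
    ∑ i : ZMod n, f i = ∑ k ∈ Finset.range n, f (k : ZMod n) := by
  refine Finset.sum_nbij' (fun i => i.val) (fun k => (k : ZMod n)) ?_ ?_ ?_ ?_ ?_
  · intro i _; exact Finset.mem_range.mpr (ZMod.val_lt i)
  · intro k _; exact Finset.mem_univ _
  · intro i _; exact ZMod.natCast_zmod_val i
  · intro k hk; exact ZMod.val_cast_of_lt (Finset.mem_range.mp hk)
  · intro i _; rw [ZMod.natCast_zmod_val]

/-- Characterisation of `-1` among the canonical representatives. -/
lemma ncyc_eq_neg_one (n : ℕ) [NeZero n] (k : ℕ) (hk : k < n) :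
    ((k : ZMod n) = -1) ↔ k = n - 1 := by
  have npos : 0 < n := Nat.pos_of_ne_zero (NeZero.ne n)
  constructor
  · intro h
    have h1 : ((k + 1 : ℕ) : ZMod n) = 0 := by push_cast; rw [h]; ring
    have hdvd : n ∣ k + 1 := (ZMod.natCast_eq_zero_iff _ _).mp h1
    have := Nat.le_of_dvd (Nat.succ_pos k) hdvd
    omega
  · intro h
    subst h
    have h1 : ((n - 1 : ℕ) : ZMod n) + 1 = 0 := by
      have : ((n - 1 + 1 : ℕ) : ZMod n) = 0 := by
        rw [Nat.sub_add_cancel npos]; exact ZMod.natCast_self n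
      push_cast at this; linear_combination this
    linear_combination h1

/-- The cycle bound: the sum of the adjacent "distances" dominates `|2 p j − 1|`. -/
lemma ncyc_cycle_bound (n : ℕ) [NeZero n] (p : ZMod n → ℝ) (j : ZMod n) :
    |2 * p j - 1| ≤ ∑ i : ZMod n,
      (if i = -1 then |p i + p (i + 1) - 1| else |p i - p (i + 1)|) := by
  have npos : 0 < n := Nat.pos_of_ne_zero (NeZero.ne n)
  set q : ℕ → ℝ := fun k => p ((k : ℕ) : ZMod n) with hq
  have key : ∑ i : ZMod n, (if i = -1 then |p i + p (i + 1) - 1| else |p i - p (i + 1)|)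
      = ∑ k ∈ Finset.range n,
        (if k = n - 1 then |q k + q (k + 1) - 1| else |q k - q (k + 1)|) := by
    rw [ncyc_sum_zmod]
    refine Finset.sum_congr rfl ?_
    intro k hk
    have hk' := Finset.mem_range.mp hk
    have hcast : ((k : ZMod n) + 1) = ((k + 1 : ℕ) : ZMod n) := by push_cast; ring
    by_cases hc : (k : ZMod n) = -1
    · rw [if_pos hc, if_pos ((ncyc_eq_neg_one n k hk').mp hc), hcast]
    · rw [if_neg hc, if_neg (fun h => hc ((ncyc_eq_neg_one n k hk').mpr h)), hcast]
  rw [key]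
  have hn1 : n = (n - 1) + 1 := (Nat.sub_add_cancel npos).symm
  rw [hn1, Finset.sum_range_succ, ← hn1]
  have hlast : (if n - 1 = n - 1 then |q (n - 1) + q n - 1| else
      |q (n - 1) - q n|) = |q (n - 1) + q 0 - 1| := by
    rw [if_pos rfl]
    have : q n = q 0 := by
      show p ((n : ℕ) : ZMod n) = p ((0 : ℕ) : ZMod n)
      rw [ZMod.natCast_self, Nat.cast_zero]
    rw [this]
  rw [hlast]
  have hrest : ∑ k ∈ Finset.range (n - 1),
      (if k = n - 1 then |q k + q (k + 1) - 1| else |q k - q (k + 1)|)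
      = ∑ k ∈ Finset.Ico 0 (n - 1), |q k - q (k + 1)| := by
    rw [Finset.range_eq_Ico]
    refine Finset.sum_congr rfl ?_
    intro k hk
    have := (Finset.mem_Ico.mp hk).2
    rw [if_neg (by omega)]
  rw [hrest]
  set m : ℕ := j.val with hm
  have hmlt : m < n := ZMod.val_lt j
  have hmle : m ≤ n - 1 := by omega
  have hsplit : ∑ k ∈ Finset.Ico 0 (n - 1), |q k - q (k + 1)| =
      ∑ k ∈ Finset.Ico 0 m, |q k - q (k + 1)| +
      ∑ k ∈ Finset.Ico m (n - 1), |q k - q (k + 1)| :=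
    (Finset.sum_Ico_consecutive _ (Nat.zero_le m) hmle).symm
  rw [hsplit]
  have h1 : |q 0 - q m| ≤ ∑ k ∈ Finset.Ico 0 m, |q k - q (k + 1)| :=
    ncyc_telescope q 0 m (Nat.zero_le m)
  have h2 : |q m - q (n - 1)| ≤ ∑ k ∈ Finset.Ico m (n - 1), |q k - q (k + 1)| :=
    ncyc_telescope q m (n - 1) hmle
  have hqm : q m = p j := by rw [hq]; simp only [hm]; rw [ZMod.natCast_zmod_val]
  have htri : |2 * p j - 1| ≤ |q 0 - q m| + |q m - q (n - 1)| + |q (n - 1) + q 0 - 1| := by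
    have e : 2 * p j - 1 = -(q 0 - q m) + (q m - q (n - 1)) + (q (n - 1) + q 0 - 1) := by
      rw [← hqm]; ring
    rw [e]
    calc |(-(q 0 - q m)) + (q m - q (n - 1)) + (q (n - 1) + q 0 - 1)|
        ≤ |(-(q 0 - q m)) + (q m - q (n - 1))| + |q (n - 1) + q 0 - 1| := abs_add_le _ _
      _ ≤ |(-(q 0 - q m))| + |q m - q (n - 1)| + |q (n - 1) + q 0 - 1| := by
          have := abs_add_le (-(q 0 - q m)) (q m - q (n - 1)); linarith
      _ = |q 0 - q m| + |q m - q (n - 1)| + |q (n - 1) + q 0 - 1| := by rw [abs_neg]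
  linarith

/-- Pointwise bound on a correlation term by the marginals. -/
lemma ncyc_pair_bound (n : ℕ) [NeZero n] {Λ : Type*} [Fintype Λ]
    (ξ : ZMod n → Bool → Λ → ℝ)
    (hξnorm : ∀ i l, ξ i false l + ξ i true l = 1)
    (ζ : ZMod n → Bool → Bool → Λ → ℝ)
    (hζ0 : ∀ i a b l, 0 ≤ ζ i a b l)
    (hζmarg₁ : ∀ i a l, ∑ b : Bool, ζ i a b l = ξ i a l)
    (hζmarg₂ : ∀ i b l, ∑ a : Bool, ζ i a b l = ξ (i + 1) b l)
    (i : ZMod n) (l : Λ) :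
    (if i = -1 then ζ i false true l + ζ i true false l
      else ζ i false false l + ζ i true true l) ≤
    1 - (if i = -1 then |ξ i false l + ξ (i + 1) false l - 1|
      else |ξ i false l - ξ (i + 1) false l|) := by
  have m1f := hζmarg₁ i false l
  have m1t := hζmarg₁ i true l
  have m2f := hζmarg₂ i false l
  have m2t := hζmarg₂ i true l
  simp only [Fintype.sum_bool] at m1f m1t m2f m2t
  have nf := hξnorm i l
  have ng := hξnorm (i + 1) l
  have h1 := hζ0 i false false l
  have h2 := hζ0 i false true l
  have h3 := hζ0 i true false l
  have h4 := hζ0 i true true l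
  by_cases h : i = -1
  · rw [if_pos h, if_pos h]
    have habs : |ξ i false l + ξ (i + 1) false l - 1|
        ≤ 1 - (ζ i false true l + ζ i true false l) :=
      abs_le.mpr ⟨by linarith, by linarith⟩
    linarith
  · rw [if_neg h, if_neg h]
    have habs : |ξ i false l - ξ (i + 1) false l|
        ≤ 1 - (ζ i false false l + ζ i true true l) :=
      abs_le.mpr ⟨by linarith, by linarith⟩
    linarith

/-- Predictability is bounded by the average pointwise bias. -/
lemma ncyc_pred_le {Λ : Type*} [Fintype Λ] (ξ : Bool → Λ → ℝ)
    (hnorm : ∀ l, ξ false l + ξ true l = 1)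
    (ν : Λ → ℝ) (hν0 : ∀ l, 0 ≤ ν l) (hν1 : ∑ l, ν l = 1) :
    predictability ξ ν ≤ ∑ l, |2 * ξ false l - 1| * ν l := by
  set A := ∑ l, ξ false l * ν l with hA
  set B := ∑ l, ξ true l * ν l with hB
  have hAB : A + B = 1 := by
    rw [hA, hB, ← Finset.sum_add_distrib, ← hν1]
    refine Finset.sum_congr rfl fun l _ => ?_
    linear_combination ν l * hnorm l
  have hdiff : A - B = ∑ l, (2 * ξ false l - 1) * ν l := by
    rw [hA, hB, ← Finset.sum_sub_distrib]
    refine Finset.sum_congr rfl fun l _ => ?_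
    linear_combination (-(ν l)) * hnorm l
  have habs : |A - B| ≤ ∑ l, |2 * ξ false l - 1| * ν l := by
    rw [hdiff]
    calc |∑ l, (2 * ξ false l - 1) * ν l| ≤ ∑ l, |(2 * ξ false l - 1) * ν l| :=
          Finset.abs_sum_le_sum_abs _ _
      _ = ∑ l, |2 * ξ false l - 1| * ν l := by
          refine Finset.sum_congr rfl fun l _ => ?_
          rw [abs_mul, abs_of_nonneg (hν0 l)]
  unfold predictability
  rcases le_total A B with h | h
  · rw [max_eq_right h]
    have : |A - B| = B - A := by rw [abs_of_nonpos (by linarith)]; ring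
    linarith
  · rw [max_eq_left h]
    have : |A - B| = A - B := abs_of_nonneg (by linarith)
    linarith

/-- **The operational noncontextuality inequality for even n-cycle scenarios** with the
chained pattern of correlations: in any measurement- and preparation-noncontextual
ontological model, `p(chained|M_*,P_*) + p(chained|M'_*,P_*^⊥) ≤ 2(1 − η_ave/n)`. -/
theorem even_ncycle_noncontextuality_inequality
    (n : ℕ) [NeZero n] (heven : Even n) (hn : 4 ≤ n)
    (Λ : Type*) [Fintype Λ]
    (ξ : ZMod n → Bool → Λ → ℝ)
    (hξ01 : ∀ i a l, ξ i a l ∈ Set.Icc (0 : ℝ) 1)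
    (hξnorm : ∀ i l, ξ i false l + ξ i true l = 1)
    (ζ ζ' : ZMod n → Bool → Bool → Λ → ℝ)
    (hζ0 : ∀ i a b l, 0 ≤ ζ i a b l)
    (hζ'0 : ∀ i a b l, 0 ≤ ζ' i a b l)
    (hζnorm : ∀ i l, ∑ a : Bool, ∑ b : Bool, ζ i a b l = 1)
    (hζ'norm : ∀ i l, ∑ a : Bool, ∑ b : Bool, ζ' i a b l = 1)
    (hζmarg₁ : ∀ i a l, ∑ b : Bool, ζ i a b l = ξ i a l)
    (hζmarg₂ : ∀ i b l, ∑ a : Bool, ζ i a b l = ξ (i + 1) b l)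
    (hζ'marg₁ : ∀ i a l, ∑ b : Bool, ζ' i a b l = ξ i a l)
    (hζ'marg₂ : ∀ i b l, ∑ a : Bool, ζ' i a b l = ξ (i + 1) b l)
    (μstar μstarPerp : Λ → ℝ) (μ μPerp : ZMod n → Λ → ℝ)
    (hμstar : (∀ l, 0 ≤ μstar l) ∧ ∑ l, μstar l = 1)
    (hμstarPerp : (∀ l, 0 ≤ μstarPerp l) ∧ ∑ l, μstarPerp l = 1)
    (hμ : ∀ i, (∀ l, 0 ≤ μ i l) ∧ ∑ l, μ i l = 1)
    (hμPerp : ∀ i, (∀ l, 0 ≤ μPerp i l) ∧ ∑ l, μPerp i l = 1)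
    (hpnc : ∀ i l, (μstar l + μstarPerp l) / 2 = (μ i l + μPerp i l) / 2) :
    pChained n ζ μstar + pChained n ζ' μstarPerp ≤
      2 * (1 - ((1 / (2 * (n : ℝ))) *
        ∑ i : ZMod n, (predictability (ξ i) (μ i) + predictability (ξ i) (μPerp i))) / n) := by
  obtain ⟨hμs0, hμs1⟩ := hμstar
  obtain ⟨hμp0, hμp1⟩ := hμstarPerp
  have npos : (0 : ℝ) < n := by
    have : 0 < n := by omega
    exact_mod_cast this
  set D : ZMod n → Λ → ℝ := fun i l =>
    if i = -1 then |ξ i false l + ξ (i + 1) false l - 1|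
    else |ξ i false l - ξ (i + 1) false l| with hD
  set S : Λ → ℝ := fun l => ∑ i : ZMod n, D i l with hS
  set G : ZMod n → Λ → ℝ := fun j l => |2 * ξ j false l - 1| with hG
  have hcycle : ∀ l j, G j l ≤ S l := by
    intro l j
    exact ncyc_cycle_bound n (fun i => ξ i false l) j
  have hG0 : ∀ j l, 0 ≤ G j l := fun j l => abs_nonneg _
  -- Step A: bound each pChained
  have stepA : ∀ (ζ : ZMod n → Bool → Bool → Λ → ℝ) (ν : Λ → ℝ),
      (∀ i a b l, 0 ≤ ζ i a b l) →
      (∀ i a l, ∑ b : Bool, ζ i a b l = ξ i a l) →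
      (∀ i b l, ∑ a : Bool, ζ i a b l = ξ (i + 1) b l) →
      (∀ l, 0 ≤ ν l) → (∑ l, ν l = 1) →
      pChained n ζ ν ≤ 1 - (1 / (n : ℝ)) * ∑ l, S l * ν l := by
    intro ζ ν hz0 hm1 hm2 hν0 hν1
    unfold pChained
    have hbound : ∑ i : ZMod n, ∑ l,
        (if i = -1 then ζ i false true l + ζ i true false l
          else ζ i false false l + ζ i true true l) * ν l
        ≤ ∑ i : ZMod n, ∑ l, (1 - D i l) * ν l := by
      refine Finset.sum_le_sum fun i _ => Finset.sum_le_sum fun l _ => ?_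
      exact mul_le_mul_of_nonneg_right
        (ncyc_pair_bound n ξ hξnorm ζ hz0 hm1 hm2 i l) (hν0 l)
    have heq : ∑ i : ZMod n, ∑ l, (1 - D i l) * ν l
        = (n : ℝ) * (∑ l, ν l) - ∑ l, S l * ν l := by
      rw [Finset.sum_comm]
      have : ∀ l, ∑ i : ZMod n, (1 - D i l) * ν l = ((n : ℝ) - S l) * ν l := by
        intro l
        rw [← Finset.sum_mul]
        congr 1
        rw [Finset.sum_sub_distrib]
        simp [ZMod.card, hS]
      simp_rw [this]
      rw [Finset.sum_congr rfl fun l _ => sub_mul ((n : ℝ)) (S l) (ν l),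
        Finset.sum_sub_distrib, ← Finset.mul_sum]
    have : ∑ i : ZMod n, ∑ l,
        (if i = -1 then ζ i false true l + ζ i true false l
          else ζ i false false l + ζ i true true l) * ν l
        ≤ (n : ℝ) - ∑ l, S l * ν l := by
      rw [heq, hν1] at hbound; linarith
    have hinv : (1 / (n : ℝ)) * (n : ℝ) = 1 := by field_simp
    calc (1 / (n : ℝ)) * ∑ i : ZMod n, ∑ l,
        (if i = -1 then ζ i false true l + ζ i true false l
          else ζ i false false l + ζ i true true l) * ν l
        ≤ (1 / (n : ℝ)) * ((n : ℝ) - ∑ l, S l * ν l) := by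
          apply mul_le_mul_of_nonneg_left this (by positivity)
      _ = 1 - (1 / (n : ℝ)) * ∑ l, S l * ν l := by
          rw [mul_sub, hinv]
  have hA := stepA ζ μstar hζ0 hζmarg₁ hζmarg₂ hμs0 hμs1
  have hA' := stepA ζ' μstarPerp hζ'0 hζ'marg₁ hζ'marg₂ hμp0 hμp1
  -- Step C: lower bound on Σ_l S l (μ* + μ*⊥)
  have stepC : (1 / (n : ℝ)) * ∑ j : ZMod n,
      (predictability (ξ j) (μ j) + predictability (ξ j) (μPerp j))
      ≤ ∑ l, S l * μstar l + ∑ l, S l * μstarPerp l := by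
    have hw0 : ∀ l, 0 ≤ μstar l + μstarPerp l := fun l => by
      have := hμs0 l; have := hμp0 l; linarith
    have hSavg : ∀ l, ∑ j : ZMod n, G j l ≤ (n : ℝ) * S l := by
      intro l
      have h : ∑ j : ZMod n, G j l ≤ ∑ _j : ZMod n, S l :=
        Finset.sum_le_sum fun j _ => hcycle l j
      rw [Finset.sum_const, Finset.card_univ, ZMod.card, nsmul_eq_mul] at h
      exact h
    have h1 : ∑ j : ZMod n, ∑ l, G j l * (μstar l + μstarPerp l)
        ≤ (n : ℝ) * (∑ l, S l * μstar l + ∑ l, S l * μstarPerp l) := by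
      rw [Finset.sum_comm]
      have : ∀ l, ∑ j : ZMod n, G j l * (μstar l + μstarPerp l)
          = (∑ j : ZMod n, G j l) * (μstar l + μstarPerp l) := fun l =>
        (Finset.sum_mul _ _ _).symm
      simp_rw [this]
      have hle : ∀ l, (∑ j : ZMod n, G j l) * (μstar l + μstarPerp l)
          ≤ ((n : ℝ) * S l) * (μstar l + μstarPerp l) := fun l =>
        mul_le_mul_of_nonneg_right (hSavg l) (hw0 l)
      calc ∑ l, (∑ j : ZMod n, G j l) * (μstar l + μstarPerp l)
          ≤ ∑ l, ((n : ℝ) * S l) * (μstar l + μstarPerp l) :=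
            Finset.sum_le_sum fun l _ => hle l
        _ = ∑ l, ((n : ℝ) * (S l * μstar l) + (n : ℝ) * (S l * μstarPerp l)) :=
            Finset.sum_congr rfl fun l _ => by ring
        _ = (n : ℝ) * (∑ l, S l * μstar l + ∑ l, S l * μstarPerp l) := by
            rw [Finset.sum_add_distrib, ← Finset.mul_sum, ← Finset.mul_sum, mul_add]
    have h2 : ∑ j : ZMod n,
        (predictability (ξ j) (μ j) + predictability (ξ j) (μPerp j))
        ≤ ∑ j : ZMod n, ∑ l, G j l * (μstar l + μstarPerp l) := by
      refine Finset.sum_le_sum fun j _ => ?_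
      have hwj : ∀ l, μstar l + μstarPerp l = μ j l + μPerp j l := by
        intro l; have := hpnc j l; linarith
      have : ∑ l, G j l * (μstar l + μstarPerp l)
          = ∑ l, G j l * μ j l + ∑ l, G j l * μPerp j l := by
        rw [← Finset.sum_add_distrib]
        refine Finset.sum_congr rfl fun l _ => ?_
        rw [hwj l]; ring
      rw [this]
      have p1 := ncyc_pred_le (ξ j) (hξnorm j) (μ j) (hμ j).1 (hμ j).2
      have p2 := ncyc_pred_le (ξ j) (hξnorm j) (μPerp j) (hμPerp j).1 (hμPerp j).2
      rw [hG]
      exact add_le_add p1 p2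
    have hfin := le_trans h2 h1
    rw [div_mul_eq_mul_div, one_mul, div_le_iff₀ npos]
    linarith
  -- final assembly
  have final : pChained n ζ μstar + pChained n ζ' μstarPerp
      ≤ 2 - (1 / (n : ℝ)) * ((1 / (n : ℝ)) * ∑ j : ZMod n,
        (predictability (ξ j) (μ j) + predictability (ξ j) (μPerp j))) := by
    have hmono : (1 / (n : ℝ)) * ((1 / (n : ℝ)) * ∑ j : ZMod n,
        (predictability (ξ j) (μ j) + predictability (ξ j) (μPerp j)))
        ≤ (1 / (n : ℝ)) * (∑ l, S l * μstar l + ∑ l, S l * μstarPerp l) :=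
      mul_le_mul_of_nonneg_left stepC (by positivity)
    calc pChained n ζ μstar + pChained n ζ' μstarPerp
        ≤ 2 - (1 / (n : ℝ)) * (∑ l, S l * μstar l + ∑ l, S l * μstarPerp l) := by
          rw [mul_add]; linarith
      _ ≤ _ := by linarith
  have hrhs : 2 * (1 - ((1 / (2 * (n : ℝ))) *
      ∑ i : ZMod n, (predictability (ξ i) (μ i) + predictability (ξ i) (μPerp i))) / n)
      = 2 - (1 / (n : ℝ)) * ((1 / (n : ℝ)) * ∑ j : ZMod n,
        (predictability (ξ j) (μ j) + predictability (ξ j) (μPerp j))) := by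
    field_simp
  rw [hrhs]
  exact final
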